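/- Let w₁ ∈ ℂ be nonzero, m ∈ ℤ, θ ∈ (0, π/4], and let Φ ∈ ℝ satisfy arg(w₁) + Φ = mπ/2 − θ (modulo 2π). Let a ∈ ℝ and φ ∈ (0,1). For b ∈ ℝ, let I₁(b) be the binary-input mutual information of the per-component one-bit receiver with gain w₁ and inputs x₁ = a·e^{iΦ} (probability φ) and x₂ = b·e^{iΦ} (probability 1−φ). Then I₁(b) converges, as b → ∞, to f_φ(p₁) where p₁ = Q(−|w₁|·a·cos θ)·Q(−|w₁|·a·sin θ). -/

import Mathlib

open MeasureTheory Real Filter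

/-- The standard Gaussian tail function `Q(x) = ∫_x^∞ (2π)^{-1/2} e^{-u²/2} du`. -/
noncomputable def gaussQ (x : ℝ) : ℝ :=
  ∫ u in Set.Ioi x, (Real.sqrt (2 * Real.pi))⁻¹ * Real.exp (-u ^ 2 / 2)

/-- `η(t) = -t log t` (with `η(0) = 0`, automatic since `Real.log 0 = 0`). -/
noncomputable def eta (t : ℝ) : ℝ := -t * Real.log t

/-- The binary entropy function `h(p) = -p log p - (1-p) log (1-p)`. -/
noncomputable def binEnt (p : ℝ) : ℝ := eta p + eta (1 - p)

/-- Boundary-extended Gaussian tail for a `k`-point ADC with thresholds `q`. -/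
noncomputable def Qb (k : ℕ) (q : ℕ → ℝ) (t : ℝ) (l : ℕ) : ℝ :=
  if l = 0 then 1 else if l = k then 0 else gaussQ (q l - t)

/-- `p_l(t) = Q(q_{l-1} - t) - Q(q_l - t)` for the `k`-point ADC. -/
noncomputable def adcP (k : ℕ) (q : ℕ → ℝ) (t : ℝ) (l : ℕ) : ℝ :=
  Qb k q t (l - 1) - Qb k q t l

/-- Sign value of a Boolean: `true ↦ +1`, `false ↦ -1`. -/
noncomputable def sgnb (b : Bool) : ℝ := if b then 1 else -1

/-- Transition probability of the complex Gaussian channel with gain `w` followed by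
per-component one-bit ADCs: `P((s_R,s_I)|x) = Q(-s_R·Re(wx))·Q(-s_I·Im(wx))`. -/
noncomputable def p1bitC (w x : ℂ) (s : Bool × Bool) : ℝ :=
  gaussQ (-(sgnb s.1) * (w * x).re) * gaussQ (-(sgnb s.2) * (w * x).im)

/-- Binary-input mutual information of the complex Gaussian channel with gain `w`
followed by per-component one-bit ADCs, input `x₁` w.p. `φ` and `x₂` w.p. `1-φ`. -/
noncomputable def miOneBitC (w : ℂ) (φ : ℝ) (x₁ x₂ : ℂ) : ℝ :=
  ∑ s : Bool × Bool,
    (eta (φ * p1bitC w x₁ s + (1 - φ) * p1bitC w x₂ s)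
      - φ * eta (p1bitC w x₁ s) - (1 - φ) * eta (p1bitC w x₂ s))

/-- Transition probability of the complex Gaussian channel with gain `w` followed by a
`(k_R, k_I)`-point per-component receiver with thresholds `qR`, `qI`:
`P((i,l)|x) = p_{R,i}(Re(wx)) · p_{I,l}(Im(wx))`. -/
noncomputable def pADCC (w : ℂ) (kR kI : ℕ) (qR qI : ℕ → ℝ) (x : ℂ) (y : ℕ × ℕ) : ℝ :=
  adcP kR qR ((w * x).re) y.1 * adcP kI qI ((w * x).im) y.2

/-- Binary-input mutual information of the complex Gaussian channel with gain `w`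
followed by a `(k_R, k_I)`-point per-component receiver, input `x₁` w.p. `φ` and
`x₂` w.p. `1-φ`. -/
noncomputable def miADCC (w : ℂ) (kR kI : ℕ) (qR qI : ℕ → ℝ) (φ : ℝ) (x₁ x₂ : ℂ) : ℝ :=
  ∑ y ∈ Finset.Icc 1 kR ×ˢ Finset.Icc 1 kI,
    (eta (φ * pADCC w kR kI qR qI x₁ y + (1 - φ) * pADCC w kR kI qR qI x₂ y)
      - φ * eta (pADCC w kR kI qR qI x₁ y) - (1 - φ) * eta (pADCC w kR kI qR qI x₂ y))

/-- `f_φ(p) = h(φ(1-p)) - φ·h(p)`. -/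
noncomputable def fphi (φ p : ℝ) : ℝ := binEnt (φ * (1 - p)) - φ * binEnt p

/-! As `b → ∞` the point `w₁·b·e^{iΦ} = b·z`, `z = w₁e^{iΦ}`, has real and imaginary parts of
fixed nonzero signs and unbounded size (the angle condition keeps `z` off the axes), so the
one-bit output for `x₂` becomes deterministic: it is the sign pattern `t` of `z`. The mutual
information is continuous in the transition probabilities, and once the second row is the point
mass at `t` it collapses to `f_φ(P(t|x₁))`, because `η(φq) - φη(q) = -φ q log φ` is linear in `q`.
Finally `|Re z|, |Im z|` are `|w₁| cos θ, |w₁| sin θ` in some order, whence `P(t|x₁) = p₁`. -/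

open ProbabilityTheory

lemma gaussQ_eq_measureReal (x : ℝ) : gaussQ x = (gaussianReal 0 1).real (Set.Ioi x) := by
  rw [measureReal_def, gaussianReal_apply_eq_integral _ one_ne_zero,
    ENNReal.toReal_ofReal (setIntegral_nonneg measurableSet_Ioi
      fun u _ => gaussianPDFReal_nonneg 0 1 u)]
  simp [gaussQ, gaussianPDFReal_def]

lemma gaussQ_eq_one_sub_cdf (x : ℝ) : gaussQ x = 1 - cdf (gaussianReal 0 1) x := by
  rw [gaussQ_eq_measureReal, cdf_eq_real, ← Set.compl_Iic,
    probReal_compl_eq_one_sub measurableSet_Iic]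

lemma gaussQ_neg (x : ℝ) : gaussQ (-x) = cdf (gaussianReal 0 1) x := by
  have := nullSingletonClass_gaussianReal (μ := 0) one_ne_zero
  rw [gaussQ_eq_measureReal, cdf_eq_real, ← measureReal_congr Iio_ae_eq_Iic]
  conv_lhs => rw [← neg_zero, ← gaussianReal_map_neg,
    map_measureReal_apply measurable_neg measurableSet_Ioi]
  simp

lemma gaussQ_neg_add_gaussQ (x : ℝ) : gaussQ (-x) + gaussQ x = 1 := by
  rw [gaussQ_neg, gaussQ_eq_one_sub_cdf]; ring

lemma tendsto_gaussQ_atTop : Tendsto gaussQ atTop (nhds 0) := by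
  rw [funext gaussQ_eq_one_sub_cdf]
  simpa using (tendsto_cdf_atTop (gaussianReal 0 1)).const_sub 1

lemma tendsto_gaussQ_atBot : Tendsto gaussQ atBot (nhds 1) := by
  rw [funext gaussQ_eq_one_sub_cdf]
  simpa using (tendsto_cdf_atBot (gaussianReal 0 1)).const_sub 1

lemma continuous_eta : Continuous eta :=
  Real.continuous_mul_log.neg.congr fun x => by simp [eta]

lemma eta_mul (φ x : ℝ) : eta (φ * x) = φ * eta x - φ * x * Real.log φ := by
  rcases eq_or_ne φ 0 with rfl | hφ
  · simp [eta]
  rcases eq_or_ne x 0 with rfl | hx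
  · simp [eta]
  rw [eta, eta, Real.log_mul hφ hx]; ring

lemma sum_eta_mixture_indicator {ι : Type*} [Fintype ι] [DecidableEq ι] {q : ι → ℝ}
    (hq : ∑ s, q s = 1) (φ : ℝ) (t : ι) :
    ∑ s, (eta (φ * q s + (1 - φ) * (if s = t then 1 else 0)) - φ * eta (q s)
      - (1 - φ) * eta (if s = t then 1 else 0)) = fphi φ (q t) := by
  have hrest : ∑ s ∈ {t}ᶜ, q s = 1 - q t := by
    rw [← hq, Fintype.sum_eq_add_sum_compl t q]; ring
  have hoff : ∀ s ∈ ({t}ᶜ : Finset ι),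
      eta (φ * q s + (1 - φ) * (if s = t then 1 else 0)) - φ * eta (q s)
        - (1 - φ) * eta (if s = t then 1 else 0) = -(φ * Real.log φ) * q s := by
    intro s hs
    rw [if_neg (by simpa using hs), mul_zero, add_zero, eta_mul]
    simp only [eta, neg_zero, zero_mul, mul_zero, sub_zero]; ring
  rw [Fintype.sum_eq_add_sum_compl t, Finset.sum_congr rfl hoff, ← Finset.mul_sum, hrest,
    if_pos rfl, fphi, binEnt, binEnt, eta_mul, show 1 - φ * (1 - q t) = φ * q t + (1 - φ) * 1 by ring,
    show eta 1 = 0 by simp [eta]]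
  ring

lemma tendsto_sum_eta_mixture {ι α : Type*} [Fintype ι] [DecidableEq ι] {l : Filter α}
    {q : ι → ℝ} (hq : ∑ s, q s = 1) {p : α → ι → ℝ} {t : ι}
    (hp : ∀ s, Tendsto (fun b => p b s) l (nhds (if s = t then 1 else 0))) (φ : ℝ) :
    Tendsto (fun b => ∑ s, (eta (φ * q s + (1 - φ) * p b s) - φ * eta (q s)
      - (1 - φ) * eta (p b s))) l (nhds (fphi φ (q t))) := by
  rw [← sum_eta_mixture_indicator hq φ t]
  refine tendsto_finsetSum _ fun s _ => ?_
  have hη := continuous_eta.tendsto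
  exact ((hη _ |>.comp ((hp s).const_mul _ |>.const_add _)).sub_const _).sub
    ((hη _ |>.comp (hp s)).const_mul _)

lemma sgnb_not (σ : Bool) : sgnb (!σ) = -sgnb σ := by
  cases σ <;> simp [sgnb]

lemma sgnb_decide_pos_mul (c : ℝ) : sgnb (decide (0 < c)) * c = |c| := by
  rcases lt_or_ge 0 c with hc | hc
  · simp [sgnb, hc, abs_of_pos hc]
  · simp [sgnb, not_lt.mpr hc, abs_of_nonpos hc]

lemma tendsto_gaussQ_neg_sgnb_mul {c : ℝ} (hc : c ≠ 0) (σ : Bool) :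
    Tendsto (fun b : ℝ => gaussQ (-sgnb σ * (c * b))) atTop
      (nhds (if σ = decide (0 < c) then 1 else 0)) := by
  have habs : 0 < |c| := abs_pos.mpr hc
  by_cases hσ : σ = decide (0 < c)
  · rw [if_pos hσ]
    have : ∀ b, -sgnb σ * (c * b) = -|c| * b := fun b => by
      rw [← sgnb_decide_pos_mul, hσ]; ring
    simp_rw [this]
    exact tendsto_gaussQ_atBot.comp (tendsto_id.const_mul_atTop_of_neg (by linarith))
  · rw [if_neg hσ, Bool.eq_not.mpr hσ]
    have : ∀ b, -sgnb (!decide (0 < c)) * (c * b) = |c| * b := fun b => by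
      rw [sgnb_not, ← sgnb_decide_pos_mul]; ring
    simp_rw [this]
    exact tendsto_gaussQ_atTop.comp (tendsto_id.const_mul_atTop habs)

noncomputable def signBits (z : ℂ) : Bool × Bool := (decide (0 < z.re), decide (0 < z.im))

lemma p1bitC_ofReal_signBits (z : ℂ) (x : ℝ) :
    p1bitC z x (signBits z) = gaussQ (-(|z.re| * x)) * gaussQ (-(|z.im| * x)) := by
  simp only [p1bitC, signBits, Complex.re_mul_ofReal, Complex.im_mul_ofReal,
    ← sgnb_decide_pos_mul, neg_mul, mul_assoc]

lemma tendsto_p1bitC_ofReal_atTop {z : ℂ} (hre : z.re ≠ 0) (him : z.im ≠ 0) (s : Bool × Bool) :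
    Tendsto (fun b : ℝ => p1bitC z b s) atTop (nhds (if s = signBits z then 1 else 0)) := by
  have h := (tendsto_gaussQ_neg_sgnb_mul hre s.1).mul (tendsto_gaussQ_neg_sgnb_mul him s.2)
  rw [ite_zero_mul_ite_zero, one_mul] at h
  simpa only [p1bitC, Complex.re_mul_ofReal, Complex.im_mul_ofReal, signBits, Prod.ext_iff] using h

lemma sum_p1bitC (w x : ℂ) : ∑ s, p1bitC w x s = 1 := by
  simp only [p1bitC, Fintype.sum_prod_type, Fintype.sum_bool, sgnb, Bool.false_eq_true, if_true,
    if_false, neg_mul, one_mul, neg_neg, ← mul_add, gaussQ_neg_add_gaussQ, mul_one]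

lemma p1bitC_mul_right (w x u : ℂ) : p1bitC w (x * u) = p1bitC (w * u) x := by
  funext s
  rw [p1bitC, p1bitC, show w * (x * u) = w * u * x by ring]

lemma miOneBitC_mul_right (w u : ℂ) (φ : ℝ) (x₁ x₂ : ℂ) :
    miOneBitC w φ (x₁ * u) (x₂ * u) = miOneBitC (w * u) φ x₁ x₂ := by
  simp only [miOneBitC, p1bitC_mul_right]

lemma tendsto_miOneBitC_ofReal_atTop {z : ℂ} (hre : z.re ≠ 0) (him : z.im ≠ 0) (φ : ℝ) (x : ℂ) :
    Tendsto (fun b : ℝ => miOneBitC z φ x b) atTop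
      (nhds (fphi φ (p1bitC z x (signBits z)))) :=
  tendsto_sum_eta_mixture (sum_p1bitC z x) (tendsto_p1bitC_ofReal_atTop hre him) φ

lemma abs_cos_abs_sin_int_mul_pi_div_two_add (m : ℤ) (x : ℝ) :
    (|Real.cos (m * π / 2 + x)| = |Real.cos x| ∧ |Real.sin (m * π / 2 + x)| = |Real.sin x|) ∨
      (|Real.cos (m * π / 2 + x)| = |Real.sin x| ∧ |Real.sin (m * π / 2 + x)| = |Real.cos x|) := by
  induction m using Int.induction_on with
  | zero => simp
  | succ k ih =>
    rw [show ((k + 1 : ℤ) : ℝ) * π / 2 + x = k * π / 2 + x + π / 2 by push_cast; ring,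
      Real.cos_add_pi_div_two, Real.sin_add_pi_div_two, abs_neg]
    exact ih.symm.imp And.symm And.symm
  | pred k ih =>
    rw [show ((-k - 1 : ℤ) : ℝ) * π / 2 + x = ((-k : ℤ) : ℝ) * π / 2 + x - π / 2 by push_cast; ring,
      Real.cos_sub_pi_div_two, Real.sin_sub_pi_div_two, abs_neg]
    exact ih.symm.imp And.symm And.symm

lemma mul_exp_ofReal_mul_I (w : ℂ) (Φ : ℝ) :
    w * Complex.exp (Φ * Complex.I) = ‖w‖ * Complex.exp ((Complex.arg w + Φ : ℝ) * Complex.I) := by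
  conv_lhs => rw [← Complex.norm_mul_exp_arg_mul_I w]
  rw [mul_assoc, ← Complex.exp_add]
  push_cast; ring_nf

lemma abs_re_im_mul_exp {w : ℂ} {Φ θ : ℝ} {m n : ℤ}
    (h : Complex.arg w + Φ = m * π / 2 - θ + n * (2 * π)) :
    (|(w * Complex.exp (Φ * Complex.I)).re| = ‖w‖ * |Real.cos θ| ∧
        |(w * Complex.exp (Φ * Complex.I)).im| = ‖w‖ * |Real.sin θ|) ∨
      (|(w * Complex.exp (Φ * Complex.I)).re| = ‖w‖ * |Real.sin θ| ∧
        |(w * Complex.exp (Φ * Complex.I)).im| = ‖w‖ * |Real.cos θ|) := by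
  rw [mul_exp_ofReal_mul_I, Complex.re_ofReal_mul, Complex.im_ofReal_mul,
    Complex.exp_ofReal_mul_I_re, Complex.exp_ofReal_mul_I_im, abs_mul, abs_mul, abs_norm, h,
    sub_eq_add_neg, Real.cos_add_int_mul_two_pi, Real.sin_add_int_mul_two_pi]
  rcases abs_cos_abs_sin_int_mul_pi_div_two_add m (-θ) with ⟨h₁, h₂⟩ | ⟨h₁, h₂⟩
  · left; rw [h₁, h₂, Real.cos_neg, Real.sin_neg, abs_neg]; exact ⟨rfl, rfl⟩
  · right; rw [h₁, h₂, Real.cos_neg, Real.sin_neg, abs_neg]; exact ⟨rfl, rfl⟩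

theorem miOneBitC_tendsto_general (w₁ : ℂ) (hw₁ : w₁ ≠ 0) (m : ℤ) (θ Φ : ℝ)
    (hθ : θ ∈ Set.Ioc (0 : ℝ) (π / 4))
    (hΦ : ∃ n : ℤ, Complex.arg w₁ + Φ = m * π / 2 - θ + n * (2 * π))
    (a φ : ℝ) :
    Tendsto
      (fun b : ℝ => miOneBitC w₁ φ
        ((a : ℂ) * Complex.exp ((Φ : ℂ) * Complex.I))
        ((b : ℂ) * Complex.exp ((Φ : ℂ) * Complex.I)))
      atTop
      (nhds (fphi φ
        (gaussQ (-(‖w₁‖ * a * Real.cos θ))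
          * gaussQ (-(‖w₁‖ * a * Real.sin θ))))) := by
  obtain ⟨n, hn⟩ := hΦ
  have hcos : 0 < Real.cos θ :=
    Real.cos_pos_of_mem_Ioo ⟨by linarith [hθ.1, Real.pi_pos], by linarith [hθ.2, Real.pi_pos]⟩
  have hsin : 0 < Real.sin θ := Real.sin_pos_of_pos_of_lt_pi hθ.1 (by linarith [hθ.2, Real.pi_pos])
  have hw : 0 < ‖w₁‖ := norm_pos_iff.mpr hw₁
  set z := w₁ * Complex.exp (Φ * Complex.I)
  have hz := abs_re_im_mul_exp hn
  rw [abs_of_pos hcos, abs_of_pos hsin] at hz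
  have hre : z.re ≠ 0 := abs_pos.mp (by rcases hz with ⟨h, -⟩ | ⟨h, -⟩ <;> rw [h] <;> positivity)
  have him : z.im ≠ 0 := abs_pos.mp (by rcases hz with ⟨-, h⟩ | ⟨-, h⟩ <;> rw [h] <;> positivity)
  have hlim : p1bitC z a (signBits z)
      = gaussQ (-(‖w₁‖ * a * Real.cos θ)) * gaussQ (-(‖w₁‖ * a * Real.sin θ)) := by
    rw [p1bitC_ofReal_signBits]
    rcases hz with ⟨h₁, h₂⟩ | ⟨h₁, h₂⟩ <;> rw [h₁, h₂] <;> ring_nf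
  simp only [miOneBitC_mul_right, ← hlim]
  exact tendsto_miOneBitC_ofReal_atTop hre him φ a

/-- With `θ ∈ (0, π/4]`, `arg(w₁) + Φ ≡ mπ/2 - θ (mod 2π)`, and inputs `x₁ = a·e^{iΦ}`
(w.p. `φ`) and `x₂ = b·e^{iΦ}` (w.p. `1-φ`), the binary-input mutual information
`I₁(b)` of the per-component one-bit receiver with gain `w₁` converges, as `b → ∞`,
to `f_φ(p₁)` where `p₁ = Q(-|w₁|·a·cos θ)·Q(-|w₁|·a·sin θ)`. -/
theorem miOneBitC_tendsto (w₁ : ℂ) (hw₁ : w₁ ≠ 0) (m : ℤ) (θ Φ : ℝ)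
    (hθ : θ ∈ Set.Ioc (0 : ℝ) (π / 4))
    (hΦ : ∃ n : ℤ, Complex.arg w₁ + Φ = m * π / 2 - θ + n * (2 * π))
    (a φ : ℝ) (hφ : φ ∈ Set.Ioo (0 : ℝ) 1) :
    Tendsto
      (fun b : ℝ => miOneBitC w₁ φ
        ((a : ℂ) * Complex.exp ((Φ : ℂ) * Complex.I))
        ((b : ℂ) * Complex.exp ((Φ : ℂ) * Complex.I)))
      atTop
      (nhds (fphi φ
        (gaussQ (-(‖w₁‖ * a * Real.cos θ))
          * gaussQ (-(‖w₁‖ * a * Real.sin θ))))) :=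
  miOneBitC_tendsto_general w₁ hw₁ m θ Φ hθ hΦ a φ
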